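/- arXiv:1407.4570 — 3 statements merged into one kernel-verified Lean document; each statement's English description precedes it below -/
import Mathlib

section
/- Let (Ω, F, P) be a probability space and T > 0. Let b, σ, a, s : Ω × [0,T] → ℝ be (jointly) measurable with σ > 0 almost everywhere, set ρ = b/σ, and assume E[∫₀ᵀ ρ_t² dt] < ∞, E[∫₀ᵀ (a_t² + s_t²) σ_t² dt] < ∞, a_t² ≥ s_t² almost everywhere, and E[∫₀ᵀ ((1/9) s_t² + (1/6)(a_t² − (2/3) s_t²)) σ_t² dt] > 0. Then the modified Sharpe ratio satisfies the bound S(a,s) := (1/3) E[∫₀ᵀ s_t b_t dt] / ( E[∫₀ᵀ ((1/9) s_t² + (1/6)(a_t² − (2/3) s_t²)) σ_t² dt] )^{1/2} ≤ (√6/3) · ( E[∫₀ᵀ ρ_t² dt] )^{1/2}. -/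
/-!
With `f = s σ` and `ρ = b / σ` we have `s b = f ρ` wherever `σ ≠ 0`. The denominator equals
`(1/6) ∫ (a σ)²`, and `s² ≤ a²` makes `f²` at most six times its integrand, so Cauchy–Schwarz gives
`∫ s b = ∫ f ρ ≤ (∫ f²)^{1/2} (∫ ρ²)^{1/2} ≤ √6 · (denominator)^{1/2} · (∫ ρ²)^{1/2}`.
-/

namespace MeasureTheory

variable {α : Type*} [MeasurableSpace α] {μ : Measure α}

theorem integral_mul_le_sqrt_integral_sq_mul_sqrt_integral_sq {f g : α → ℝ}
    (hf : MemLp f 2 μ) (hg : MemLp g 2 μ) :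
    ∫ x, f x * g x ∂μ ≤ √(∫ x, f x ^ 2 ∂μ) * √(∫ x, g x ^ 2 ∂μ) := by
  have hfg : Integrable (fun x => f x * g x) μ := hf.integrable_mul hg
  have hnorm_sq (u : α → ℝ) : ∫ x, ‖u x‖ ^ (2 : ℝ) ∂μ = ∫ x, u x ^ 2 ∂μ := by
    simp only [Real.rpow_two, Real.norm_eq_abs, sq_abs]
  calc ∫ x, f x * g x ∂μ ≤ ∫ x, ‖f x‖ * ‖g x‖ ∂μ :=
        integral_mono hfg (by simpa only [norm_mul] using hfg.norm)
          fun x => (le_abs_self _).trans_eq (abs_mul _ _)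
    _ ≤ (∫ x, ‖f x‖ ^ (2 : ℝ) ∂μ) ^ (1 / (2 : ℝ)) * (∫ x, ‖g x‖ ^ (2 : ℝ) ∂μ) ^ (1 / (2 : ℝ)) :=
        integral_mul_norm_le_Lp_mul_Lq .two_two (by simpa using hf) (by simpa using hg)
    _ = √(∫ x, f x ^ 2 ∂μ) * √(∫ x, g x ^ 2 ∂μ) := by
        rw [hnorm_sq, hnorm_sq, ← Real.sqrt_eq_rpow, ← Real.sqrt_eq_rpow]

theorem integral_mul_le_sqrt_mul_sqrt_integral_sq_of_sq_le {f g h : α → ℝ}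
    (hf : AEStronglyMeasurable f μ) (hh : Integrable h μ) (hfh : ∀ᵐ x ∂μ, f x ^ 2 ≤ h x)
    (hg : MemLp g 2 μ) :
    ∫ x, f x * g x ∂μ ≤ √(∫ x, h x ∂μ) * √(∫ x, g x ^ 2 ∂μ) := by
  have hf_sq : Integrable (fun x => f x ^ 2) μ :=
    hh.mono' (hf.pow 2) (by
      filter_upwards [hfh] with x hx
      rwa [Real.norm_of_nonneg (sq_nonneg _)])
  calc ∫ x, f x * g x ∂μ ≤ √(∫ x, f x ^ 2 ∂μ) * √(∫ x, g x ^ 2 ∂μ) :=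
        integral_mul_le_sqrt_integral_sq_mul_sqrt_integral_sq
          ((memLp_two_iff_integrable_sq hf).2 hf_sq) hg
    _ ≤ √(∫ x, h x ∂μ) * √(∫ x, g x ^ 2 ∂μ) :=
        mul_le_mul_of_nonneg_right (Real.sqrt_le_sqrt (integral_mono_ae hf_sq hh hfh))
          (Real.sqrt_nonneg _)

end MeasureTheory

open MeasureTheory

theorem modified_sharpe_ratio_upper_bound_general
    {Ω : Type*} [MeasurableSpace Ω]
    (b σ a s : Ω × ℝ → ℝ)
    (hb : Measurable b) (hσ : Measurable σ) (hs : Measurable s)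
    (π : Measure (Ω × ℝ))
    (hσpos : ∀ᵐ p ∂π, 0 < σ p)
    (hρint : Integrable (fun p => (b p / σ p) ^ 2) π)
    (hge : ∀ᵐ p ∂π, s p ^ 2 ≤ a p ^ 2)
    (hden : 0 < ∫ p, ((1 / 9) * s p ^ 2 + (1 / 6) * (a p ^ 2 - (2 / 3) * s p ^ 2)) * σ p ^ 2 ∂π) :
    (1 / 3) * (∫ p, s p * b p ∂π) /
        Real.sqrt (∫ p, ((1 / 9) * s p ^ 2 + (1 / 6) * (a p ^ 2 - (2 / 3) * s p ^ 2)) * σ p ^ 2 ∂π)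
      ≤ (Real.sqrt 6 / 3) * Real.sqrt (∫ p, (b p / σ p) ^ 2 ∂π) := by
  have hsb : ∫ p, s p * b p ∂π = ∫ p, (s p * σ p) * (b p / σ p) ∂π := by
    refine integral_congr_ae ?_
    filter_upwards [hσpos] with p hp
    field_simp
  have hsσ_sq : ∀ᵐ p ∂π, (s p * σ p) ^ 2 ≤
      6 * (((1 / 9) * s p ^ 2 + (1 / 6) * (a p ^ 2 - (2 / 3) * s p ^ 2)) * σ p ^ 2) := by
    filter_upwards [hge] with p hp
    nlinarith [sq_nonneg (σ p)]
  -- The denominator's integrand is integrable because its Bochner integral is nonzero.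
  have hcs := integral_mul_le_sqrt_mul_sqrt_integral_sq_of_sq_le
    (f := fun p => s p * σ p) (g := fun p => b p / σ p) (hs.mul hσ).aestronglyMeasurable ((Integrable.of_integral_ne_zero hden.ne').const_mul 6) hsσ_sq
    ((memLp_two_iff_integrable_sq (hb.div hσ).aestronglyMeasurable).2 hρint)
  rw [integral_const_mul, Real.sqrt_mul (by norm_num), ← hsb] at hcs
  rw [div_le_iff₀ (Real.sqrt_pos.2 hden)]
  linarith

/-- Upper-bound half of Theorem 3.1: the modified Sharpe ratio of any admissible
pair `(a, s)` is bounded by `(√6/3) · (E[∫₀ᵀ ρ_t² dt])^{1/2}` where `ρ = b/σ`. -/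
theorem modified_sharpe_ratio_upper_bound
    {Ω : Type*} [MeasurableSpace Ω] (μ : Measure Ω) [IsProbabilityMeasure μ]
    (T : ℝ) (hT : 0 < T)
    (b σ a s : Ω × ℝ → ℝ)
    (hb : Measurable b) (hσ : Measurable σ) (ha : Measurable a) (hs : Measurable s)
    (π : Measure (Ω × ℝ))
    (hπ : π = μ.prod (volume.restrict (Set.Icc (0 : ℝ) T)))
    (hσpos : ∀ᵐ p ∂π, 0 < σ p)
    (hρint : Integrable (fun p => (b p / σ p) ^ 2) π)
    (hasint : Integrable (fun p => (a p ^ 2 + s p ^ 2) * σ p ^ 2) π)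
    (hge : ∀ᵐ p ∂π, s p ^ 2 ≤ a p ^ 2)
    (hden : 0 < ∫ p, ((1 / 9) * s p ^ 2 + (1 / 6) * (a p ^ 2 - (2 / 3) * s p ^ 2)) * σ p ^ 2 ∂π) :
    (1 / 3) * (∫ p, s p * b p ∂π) /
        Real.sqrt (∫ p, ((1 / 9) * s p ^ 2 + (1 / 6) * (a p ^ 2 - (2 / 3) * s p ^ 2)) * σ p ^ 2 ∂π)
      ≤ (Real.sqrt 6 / 3) * Real.sqrt (∫ p, (b p / σ p) ^ 2 ∂π) :=
  modified_sharpe_ratio_upper_bound_general b σ a s hb hσ hs π hσpos hρint hge hden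
end

section
/- Let (Ω, F, P) be a probability space and T > 0. Let b, σ : Ω × [0,T] → ℝ be measurable with σ > 0 almost everywhere, set ρ = b/σ, and assume 0 < E[∫₀ᵀ ρ_t² dt] < ∞. For λ > 0 define s^λ = (b/σ²)(e^λ − e^{−λ}) and a^λ ≥ 0 by (a^λ)² = (s^λ)² + (b/σ²)². Then the modified Sharpe ratio S(λ) := (1/3) E[∫₀ᵀ s^λ_t b_t dt] / ( E[∫₀ᵀ ((1/9)(s^λ_t)² + (1/6)((a^λ_t)² − (2/3)(s^λ_t)²)) σ_t² dt] )^{1/2} equals (√6/3) · (e^λ − e^{−λ}) / ((e^λ − e^{−λ})² + 1)^{1/2} · ( E[∫₀ᵀ ρ_t² dt] )^{1/2}; in particular S(λ) → (√6/3)·( E[∫₀ᵀ ρ_t² dt] )^{1/2} as λ → +∞. -/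
open MeasureTheory Filter Topology

/-!
With `r = b/σ²` and `k = e^λ − e^{−λ}` the integrands are pointwise multiples of `ρ² = r² σ²`:
`s^λ b = k ρ²` and the denominator integrand collapses to `(k² + 1) ρ² / 6`. So
`S(λ) = (√6/3) · k/√(k² + 1) · (E∫ρ²)^{1/2}`, and `k/√(k² + 1) → 1` as `k → ∞`.
-/

theorem div_sq_mul_self (x y : ℝ) : x / y ^ 2 * x = (x / y) ^ 2 := by ring

theorem div_sq_sq_mul_sq (x y : ℝ) : (x / y ^ 2) ^ 2 * y ^ 2 = (x / y) ^ 2 := by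
  rcases eq_or_ne y 0 with rfl | hy
  · simp
  · field_simp

theorem one_third_mul_div_sqrt_eq {k I : ℝ} (hI : 0 < I) :
    1 / 3 * (k * I) / √(1 / 6 * (k ^ 2 + 1) * I) = √6 / 3 * k / √(k ^ 2 + 1) * √I := by
  have hk : 0 < √(k ^ 2 + 1) := Real.sqrt_pos.2 (by positivity)
  have hI' : 0 < √I := Real.sqrt_pos.2 hI
  rw [Real.sqrt_mul (by positivity), Real.sqrt_mul (by norm_num), Real.sqrt_div' 1 (by norm_num),
    Real.sqrt_one]
  field_simp
  rw [Real.sq_sqrt hI.le]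

theorem tendsto_div_sqrt_sq_add_one_atTop :
    Tendsto (fun x : ℝ => x / √(x ^ 2 + 1)) atTop (𝓝 1) := by
  have hlim : Tendsto (fun x : ℝ => (√(1 + x⁻¹ ^ 2))⁻¹) atTop (𝓝 1) := by
    simpa using (((tendsto_inv_atTop_zero.pow 2).const_add 1).sqrt).inv₀ (by simp)
  refine hlim.congr' ?_
  filter_upwards [eventually_gt_atTop 0] with x hx
  rw [show 1 + x⁻¹ ^ 2 = (x ^ 2 + 1) / x ^ 2 by field_simp,
    Real.sqrt_div' _ (sq_nonneg x), Real.sqrt_sq hx.le, inv_div]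

theorem tendsto_exp_sub_exp_neg_atTop :
    Tendsto (fun x : ℝ => Real.exp x - Real.exp (-x)) atTop atTop := by
  simpa [sub_eq_add_neg] using
    Real.tendsto_exp_atTop.atTop_add Real.tendsto_exp_neg_atTop_nhds_zero.neg

theorem modified_sharpe_ratio_attained_general
    {Ω : Type*} [MeasurableSpace Ω]
    (b σ : Ω × ℝ → ℝ)
    (π : Measure (Ω × ℝ))
    (hρpos : 0 < ∫ p, (b p / σ p) ^ 2 ∂π)
    (sl al : ℝ → Ω × ℝ → ℝ)
    (hsl : ∀ l p, sl l p = (b p / σ p ^ 2) * (Real.exp l - Real.exp (-l)))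
    (hal : ∀ l p, (al l p) ^ 2 = (sl l p) ^ 2 + (b p / σ p ^ 2) ^ 2)
    (S : ℝ → ℝ)
    (hS : ∀ l, S l = (1 / 3) * (∫ p, sl l p * b p ∂π) /
        Real.sqrt (∫ p, ((1 / 9) * (sl l p) ^ 2 +
          (1 / 6) * ((al l p) ^ 2 - (2 / 3) * (sl l p) ^ 2)) * σ p ^ 2 ∂π)) :
    (∀ l : ℝ, 0 < l →
      S l = (Real.sqrt 6 / 3) * (Real.exp l - Real.exp (-l)) /
          Real.sqrt ((Real.exp l - Real.exp (-l)) ^ 2 + 1) *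
          Real.sqrt (∫ p, (b p / σ p) ^ 2 ∂π)) ∧
    Filter.Tendsto S Filter.atTop
      (nhds ((Real.sqrt 6 / 3) * Real.sqrt (∫ p, (b p / σ p) ^ 2 ∂π))) := by
  set I := ∫ p, (b p / σ p) ^ 2 ∂π
  set k := fun l : ℝ => Real.exp l - Real.exp (-l)
  have hnum : ∀ l, ∫ p, sl l p * b p ∂π = k l * I := fun l => by
    rw [← integral_const_mul]
    congr 1 with p
    simp only [hsl]
    linear_combination k l * div_sq_mul_self (b p) (σ p)
  have hden : ∀ l, ∫ p, ((1 / 9) * (sl l p) ^ 2 +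
      (1 / 6) * ((al l p) ^ 2 - (2 / 3) * (sl l p) ^ 2)) * σ p ^ 2 ∂π =
      1 / 6 * (k l ^ 2 + 1) * I := fun l => by
    rw [← integral_const_mul]
    congr 1 with p
    simp only [hal, hsl]
    linear_combination (k l ^ 2 + 1) / 6 * div_sq_sq_mul_sq (b p) (σ p)
  have hS' : ∀ l, S l = √6 / 3 * k l / √(k l ^ 2 + 1) * √I := fun l => by
    rw [hS, hnum, hden, one_third_mul_div_sqrt_eq hρpos]
  refine ⟨fun l _ => hS' l, ?_⟩
  have hlim := (tendsto_div_sqrt_sq_add_one_atTop.comp tendsto_exp_sub_exp_neg_atTop).const_mul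
    (√6 / 3 * √I)
  rw [mul_one] at hlim
  refine hlim.congr fun l => ?_
  rw [hS' l]
  simp only [Function.comp_apply]
  ring

/-- Attainability half of Theorem 3.1: the rule with barriers proportional to
`b/σ²` with asymmetry parameter `λ` has modified Sharpe ratio
`(√6/3)·(e^λ − e^{−λ})/((e^λ − e^{−λ})² + 1)^{1/2}·(E[∫₀ᵀ ρ²])^{1/2}`, which tends
to the nearly efficient value `(√6/3)·(E[∫₀ᵀ ρ²])^{1/2}` as `λ → ∞`. -/
theorem modified_sharpe_ratio_attained
    {Ω : Type*} [MeasurableSpace Ω] (μ : Measure Ω) [IsProbabilityMeasure μ]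
    (T : ℝ) (hT : 0 < T)
    (b σ : Ω × ℝ → ℝ)
    (hb : Measurable b) (hσ : Measurable σ)
    (π : Measure (Ω × ℝ))
    (hπ : π = μ.prod (volume.restrict (Set.Icc (0 : ℝ) T)))
    (hσpos : ∀ᵐ p ∂π, 0 < σ p)
    (hρint : Integrable (fun p => (b p / σ p) ^ 2) π)
    (hρpos : 0 < ∫ p, (b p / σ p) ^ 2 ∂π)
    (sl al : ℝ → Ω × ℝ → ℝ)
    (hsl : ∀ l p, sl l p = (b p / σ p ^ 2) * (Real.exp l - Real.exp (-l)))
    (halnn : ∀ l p, 0 ≤ al l p)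
    (hal : ∀ l p, (al l p) ^ 2 = (sl l p) ^ 2 + (b p / σ p ^ 2) ^ 2)
    (S : ℝ → ℝ)
    (hS : ∀ l, S l = (1 / 3) * (∫ p, sl l p * b p ∂π) /
        Real.sqrt (∫ p, ((1 / 9) * (sl l p) ^ 2 +
          (1 / 6) * ((al l p) ^ 2 - (2 / 3) * (sl l p) ^ 2)) * σ p ^ 2 ∂π)) :
    (∀ l : ℝ, 0 < l →
      S l = (Real.sqrt 6 / 3) * (Real.exp l - Real.exp (-l)) /
          Real.sqrt ((Real.exp l - Real.exp (-l)) ^ 2 + 1) *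
          Real.sqrt (∫ p, (b p / σ p) ^ 2 ∂π)) ∧
    Filter.Tendsto S Filter.atTop
      (nhds ((Real.sqrt 6 / 3) * Real.sqrt (∫ p, (b p / σ p) ^ 2 ∂π))) :=
  modified_sharpe_ratio_attained_general b σ π hρpos sl al hsl hal S hS
end

section
/- Let T > 0, μ > 0 and let ρ : [0,T] → ℝ be continuous. Let W : [0,T] → (0,∞) be continuous with W(t)·e^{W(t)} = (1/2)·exp( ∫_t^T ρ(s)² ds + 1/2 ) for all t ∈ [0,T], and define P(t) = μ / W(t). Then P(T) = 2μ, and for every t ∈ [0,T] the function P is differentiable at t (one-sidedly at the endpoints, i.e. within [0,T]) with derivative P'(t) = ρ(t)² · P(t)² / (P(t) + μ). -/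
open Set Topology Real

/-!
Since `x ↦ x eˣ` is injective on `[0, ∞)`, the defining relation `W eᵂ = ½ exp (∫ₜᵀ ρ² + ½)`
forces `W(T) = ½`, i.e. `P(T) = 2μ`. Differentiating the logarithm of that relation,
`log W + W = log ½ + ½ + ∫ₜᵀ ρ²`, gives `W'/W + W' = -ρ²`, i.e. `W' = -ρ² W / (1 + W)`;
this implicit differentiation is legitimate because `W` is continuous and `(x eˣ)' ≠ 0` for
`x > 0`. Then `P = μ / W` has `P' = μ ρ² / (W (1 + W)) = ρ² P² / (P + μ)`.
-/

theorem HasDerivWithinAt.of_comp_left {𝕜 : Type*} [NontriviallyNormedField 𝕜]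
    {f g h : 𝕜 → 𝕜} {f' h' a : 𝕜} {s : Set 𝕜}
    (hg : ContinuousWithinAt g s a) (hf : HasDerivAt f f' (g a))
    (hh : HasDerivWithinAt h h' s a) (hf' : f' ≠ 0) (hcomp : f ∘ g =ᶠ[𝓝[s] a] h)
    (ha : a ∈ s) : HasDerivWithinAt g (h' / f') s a := by
  have := (hf.hasFDerivAt.hasFDerivWithinAt (s := univ)).of_comp_of_leftInverse
    (hg.tendsto_nhdsWithin (mapsTo_univ _ _)) hh hcomp
    (f'symm := .toSpanSingleton 𝕜 f'⁻¹) (fun _ ↦ by simp [hf']) ha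
  convert! this.hasDerivWithinAt using 1
  simp [div_eq_mul_inv, mul_comm]

theorem ContinuousOn.hasDerivWithinAt_integral_left {E : Type*} [NormedAddCommGroup E]
    [NormedSpace ℝ E] [CompleteSpace E] {f : ℝ → E} {a b t : ℝ}
    (hf : ContinuousOn f (Icc a b)) (ht : t ∈ Icc a b) :
    HasDerivWithinAt (fun u ↦ ∫ x in u..b, f x) (-f t) (Icc a b) t := by
  have : Fact (t ∈ Icc a b) := ⟨ht⟩
  refine intervalIntegral.integral_hasDerivWithinAt_left ?_
    (hf.stronglyMeasurableAtFilter_nhdsWithin measurableSet_Icc t) (hf t ht)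
  exact (hf.mono (Icc_subset_Icc_left ht.1)).intervalIntegrable_of_Icc ht.2

theorem ContinuousOn.hasDerivWithinAt_mul_exp_integral_left {f : ℝ → ℝ} {a b t : ℝ}
    (hf : ContinuousOn f (Icc a b)) (ht : t ∈ Icc a b) (c d : ℝ) :
    HasDerivWithinAt (fun u ↦ c * exp ((∫ x in u..b, f x) + d))
      (-f t * (c * exp ((∫ x in t..b, f x) + d))) (Icc a b) t :=
  (((hf.hasDerivWithinAt_integral_left ht).add_const d).exp.const_mul c).congr_deriv (by ring)

theorem strictMonoOn_mul_exp : StrictMonoOn (fun x : ℝ ↦ x * exp x) (Ici 0) :=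
  fun _ hx _ _ hxy ↦ mul_lt_mul'' hxy (exp_lt_exp.2 hxy) hx (exp_pos _).le

theorem hasDerivAt_mul_exp (x : ℝ) : HasDerivAt (fun x ↦ x * exp x) ((1 + x) * exp x) x :=
  ((hasDerivAt_id' x).fun_mul (hasDerivAt_exp x)).congr_deriv (by ring)

theorem HasDerivWithinAt.of_mul_exp_eq {W F : ℝ → ℝ} {k t : ℝ} {s : Set ℝ}
    (hW : ContinuousWithinAt W s t) (hF : HasDerivWithinAt F (k * F t) s t)
    (heq : ∀ u ∈ s, W u * Real.exp (W u) = F u) (ht : t ∈ s) (hWt : 1 + W t ≠ 0) :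
    HasDerivWithinAt W (k * W t / (1 + W t)) s t := by
  have hcomp : (fun x ↦ x * Real.exp x) ∘ W =ᶠ[𝓝[s] t] F :=
    eventually_mem_nhdsWithin.mono heq
  refine (hF.of_comp_left hW (hasDerivAt_mul_exp (W t)) (by positivity) hcomp ht).congr_deriv ?_
  rw [← heq t ht]
  field_simp

theorem riccati_explicit_solution_general
    (T : ℝ) (hT : 0 < T) (μ : ℝ)
    (ρ : ℝ → ℝ) (hρ : ContinuousOn ρ (Set.Icc 0 T))
    (W : ℝ → ℝ) (hWcont : ContinuousOn W (Set.Icc 0 T))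
    (hWpos : ∀ t ∈ Set.Icc (0 : ℝ) T, 0 < W t)
    (hWeq : ∀ t ∈ Set.Icc (0 : ℝ) T,
      W t * Real.exp (W t) = (1 / 2) * Real.exp ((∫ s in t..T, ρ s ^ 2) + 1 / 2))
    (P : ℝ → ℝ) (hP : ∀ t ∈ Set.Icc (0 : ℝ) T, P t = μ / W t) :
    P T = 2 * μ ∧
    ∀ t ∈ Set.Icc (0 : ℝ) T,
      HasDerivWithinAt P (ρ t ^ 2 * P t ^ 2 / (P t + μ)) (Set.Icc 0 T) t := by
  have hTmem : T ∈ Icc (0 : ℝ) T := right_mem_Icc.2 hT.le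
  have hWT : W T = 1 / 2 := by
    refine strictMonoOn_mul_exp.injOn (hWpos T hTmem).le (by norm_num : (0 : ℝ) ≤ 1 / 2) ?_
    simpa using hWeq T hTmem
  refine ⟨by rw [hP T hTmem, hWT]; ring, fun t ht ↦ ?_⟩
  have hWt := hWpos t ht
  have hW' : HasDerivWithinAt W (-ρ t ^ 2 * W t / (1 + W t)) (Icc 0 T) t := by
    refine HasDerivWithinAt.of_mul_exp_eq (hWcont t ht) ?_ hWeq ht (by positivity)
    exact (hρ.pow 2).hasDerivWithinAt_mul_exp_integral_left ht _ _
  refine (((hW'.inv hWt.ne').const_mul μ).congr hP (hP t ht)).congr_deriv ?_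
  rw [hP t ht]
  field_simp

/-- Explicit solution of the scalar Riccati terminal-value problem of Section 5:
if `W : [0,T] → (0,∞)` is continuous with `W(t)·e^{W(t)} = (1/2)·exp(∫_t^T ρ² + 1/2)`
and `P = μ/W`, then `P(T) = 2μ` and `P` is differentiable within `[0,T]` with
`P'(t) = ρ(t)²·P(t)²/(P(t) + μ)`. -/
theorem riccati_explicit_solution
    (T : ℝ) (hT : 0 < T) (μ : ℝ) (hμ : 0 < μ)
    (ρ : ℝ → ℝ) (hρ : ContinuousOn ρ (Set.Icc 0 T))
    (W : ℝ → ℝ) (hWcont : ContinuousOn W (Set.Icc 0 T))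
    (hWpos : ∀ t ∈ Set.Icc (0 : ℝ) T, 0 < W t)
    (hWeq : ∀ t ∈ Set.Icc (0 : ℝ) T,
      W t * Real.exp (W t) = (1 / 2) * Real.exp ((∫ s in t..T, ρ s ^ 2) + 1 / 2))
    (P : ℝ → ℝ) (hP : ∀ t ∈ Set.Icc (0 : ℝ) T, P t = μ / W t) :
    P T = 2 * μ ∧
    ∀ t ∈ Set.Icc (0 : ℝ) T,
      HasDerivWithinAt P (ρ t ^ 2 * P t ^ 2 / (P t + μ)) (Set.Icc 0 T) t :=
  riccati_explicit_solution_general T hT μ ρ hρ W hWcont hWpos hWeq P hP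
end
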